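/- arXiv:1111.3905 — 3 statements merged into one kernel-verified Lean document; each statement's English description precedes it below -/
import Mathlib

section
/- Let ω ∈ ℝⁿ, τ > 1, γ ∈ (0,1), and let k ∈ ℤⁿ with |k| ≥ 1. Suppose i, j are integers with i > j, |i − j| bounded by C|k|, and both i, j larger than some threshold of size O(|k|^τ γ^{−1/3}). If |ω·k + (i−j)| ≥ 2γ^{2/3}/|k|^τ and the perturbed frequencies satisfy Ω_i = i + a + m/(2i) + O(γ^{2/3}/i), Ω_j = j + a + m/(2j) + O(γ^{2/3}/j) for a common constant a, then |ω·k + Ω_i − Ω_j| ≥ γ^{2/3}/|k|^τ. -/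
set_option maxHeartbeats 2000000


theorem stmt9 (n : ℕ) (C m C₂ : ℝ) (hC : 0 < C) (hm : 0 < m) (hC₂ : 0 ≤ C₂) :
    ∃ D : ℝ, 0 < D ∧
      ∀ (ω : Fin n → ℝ) (k : Fin n → ℤ) (τ γ : ℝ) (i j : ℤ) (a Ωi Ωj : ℝ),
        1 < τ → 0 < γ → γ < 1 →
        1 ≤ ∑ l, |(k l : ℝ)| →
        j < i →
        |(i : ℝ) - (j : ℝ)| ≤ C * ∑ l, |(k l : ℝ)| →
        D * (∑ l, |(k l : ℝ)|) ^ τ * γ ^ (-(1:ℝ)/3) ≤ (j : ℝ) →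
        2 * γ ^ ((2:ℝ)/3) / (∑ l, |(k l : ℝ)|) ^ τ
          ≤ |(∑ l, ω l * (k l : ℝ)) + ((i:ℝ) - (j:ℝ))| →
        |Ωi - ((i:ℝ) + a + m / (2*(i:ℝ)))| ≤ C₂ * γ ^ ((2:ℝ)/3) / (i:ℝ) →
        |Ωj - ((j:ℝ) + a + m / (2*(j:ℝ)))| ≤ C₂ * γ ^ ((2:ℝ)/3) / (j:ℝ) →
        γ ^ ((2:ℝ)/3) / (∑ l, |(k l : ℝ)|) ^ τ
          ≤ |(∑ l, ω l * (k l : ℝ)) + Ωi - Ωj| := by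
  refine ⟨1 + 4*C₂ + m*C, by nlinarith [mul_pos hm hC], ?_⟩
  intro ω k τ γ i j a Ωi Ωj hτ hγ hγ1 hS hij hijk hjD hsmall hΩi hΩj
  set S : ℝ := ∑ l, |(k l : ℝ)| with hSdef
  set x : ℝ := ∑ l, ω l * (k l : ℝ) with hxdef
  set D : ℝ := 1 + 4*C₂ + m*C with hDdef
  set T : ℝ := S ^ τ with hTdef
  set g : ℝ := γ ^ ((2:ℝ)/3) with hgdef
  set u : ℝ := γ ^ (-(1:ℝ)/3) with hudef
  have hD1 : 1 ≤ D := by nlinarith [mul_pos hm hC]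
  have hT1 : 1 ≤ T := Real.one_le_rpow hS (by linarith)
  have hST : S ≤ T := by
    calc S = S ^ (1:ℝ) := (Real.rpow_one S).symm
    _ ≤ S ^ τ := Real.rpow_le_rpow_of_exponent_le hS hτ.le
  have hu1 : 1 ≤ u :=
    Real.one_le_rpow_of_pos_of_le_one_of_nonpos hγ hγ1.le (by norm_num)
  have hg0 : 0 < g := Real.rpow_pos_of_pos hγ _
  have hgu : g * (u * u) = 1 := by
    rw [hgdef, hudef, ← Real.rpow_add hγ, ← Real.rpow_add hγ]
    norm_num
  clear_value S x D T g u
  have hDTu : D * T * u ≤ (j : ℝ) := hjD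
  have hDT1 : (1:ℝ)*1 ≤ D*T := mul_le_mul hD1 hT1 zero_le_one (by linarith)
  have hDTu1 : ((1:ℝ)*1)*1 ≤ (D*T)*u := mul_le_mul hDT1 hu1 zero_le_one (by linarith)
  have hj1 : 1 ≤ (j : ℝ) := by nlinarith
  have hjpos : (0:ℝ) < j := by linarith
  have hji : (j:ℝ) < (i:ℝ) := by exact_mod_cast hij
  have hipos : (0:ℝ) < i := by linarith
  have hijsub : (i:ℝ) - j ≤ C * S := by
    have := (abs_le.mp hijk).2
    linarith
  -- key1 : cross-multiplied bound for the m/(2i) - m/(2j) term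
  have key1 : m * ((i:ℝ) - j) * (2*T) ≤ g * (2*((i:ℝ)*j)) := by
    have hT0 : (0:ℝ) ≤ T := by linarith
    have hmc : m * C ≤ D := by nlinarith
    have s0 : m * ((i:ℝ) - j) ≤ D * T := by
      have a1 : m * ((i:ℝ) - j) ≤ m * (C*S) := by nlinarith
      have a2 : m * (C*S) ≤ (m*C) * T := by nlinarith [mul_pos hm hC]
      have a3 : (m*C) * T ≤ D * T := mul_le_mul_of_nonneg_right hmc hT0
      linarith
    have s1 : m * ((i:ℝ) - j) * T ≤ (D*T)*(D*T) := by
      have a1 : m * ((i:ℝ) - j) * T ≤ (D*T)*T :=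
        mul_le_mul_of_nonneg_right s0 hT0
      have a2 : (D*T)*T ≤ (D*T)*(D*T) := by nlinarith
      linarith
    have h1 : (D*T*u)^2 ≤ (j:ℝ)^2 := by
      have h0 : 0 ≤ D*T*u := by positivity
      nlinarith
    have s2 : (D*T)^2 ≤ g * (j:ℝ)^2 := by
      have e : g * (D*T*u)^2 = (D*T)^2 := by
        have e2 : g * (D*T*u)^2 = (g*(u*u)) * (D*T)^2 := by ring
        rw [e2, hgu, one_mul]
      nlinarith
    have s3 : g * (j:ℝ)^2 ≤ g * ((i:ℝ)*j) := by nlinarith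
    nlinarith [s1, s2, s3]
  -- key2 : bound for the error terms
  have key2 : 2*C₂*g * (2*T) ≤ g * (j:ℝ) := by
    have hT0 : (0:ℝ) ≤ T := by linarith
    have h1 : 4*C₂*T ≤ D*T :=
      mul_le_mul_of_nonneg_right (by nlinarith [mul_pos hm hC]) hT0
    have h2 : D*T ≤ D*T*u := le_mul_of_one_le_right (by nlinarith) hu1
    have h3 : 4*C₂*T ≤ (j:ℝ) := by linarith
    have h4 : g * (4*C₂*T) ≤ g * (j:ℝ) := mul_le_mul_of_nonneg_left h3 hg0.le
    nlinarith [h4]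
  have hAij : (0:ℝ) < 2*((i:ℝ)*j) := by have := mul_pos hipos hjpos; linarith
  have hAT : (0:ℝ) < 2*T := by linarith
  have hmbound : m * ((i:ℝ) - j) / (2*((i:ℝ)*j)) ≤ g / (2*T) := by
    rw [div_le_div_iff₀ hAij hAT]
    linarith
  have hebound : 2*C₂*g / (j:ℝ) ≤ g / (2*T) := by
    rw [div_le_div_iff₀ hjpos hAT]
    linarith
  -- error terms
  have hΩi' : |Ωi - ((i:ℝ) + a + m / (2*(i:ℝ)))| ≤ C₂ * g / (j:ℝ) := by
    refine le_trans hΩi ?_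
    gcongr <;> first
      | exact mul_nonneg hC₂ hg0.le
      | linarith
  have hdiff : m/(2*(i:ℝ)) - m/(2*(j:ℝ)) = -(m*((i:ℝ)-j)/(2*((i:ℝ)*j))) := by
    field_simp
    ring
  have habs : |(x + Ωi - Ωj) - (x + ((i:ℝ)-(j:ℝ)))| ≤ g / T := by
    have hid : (x + Ωi - Ωj) - (x + ((i:ℝ)-(j:ℝ))) =
        (Ωi - ((i:ℝ) + a + m / (2*(i:ℝ)))) - (Ωj - ((j:ℝ) + a + m / (2*(j:ℝ))))
          + (m/(2*(i:ℝ)) - m/(2*(j:ℝ))) := by ring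
    rw [hid]
    have h1 := abs_add_le ((Ωi - ((i:ℝ) + a + m / (2*(i:ℝ)))) - (Ωj - ((j:ℝ) + a + m / (2*(j:ℝ)))))
      (m/(2*(i:ℝ)) - m/(2*(j:ℝ)))
    have h2 := abs_sub (Ωi - ((i:ℝ) + a + m / (2*(i:ℝ)))) (Ωj - ((j:ℝ) + a + m / (2*(j:ℝ))))
    have h3 : |m/(2*(i:ℝ)) - m/(2*(j:ℝ))| = m*((i:ℝ)-j)/(2*((i:ℝ)*j)) := by
      rw [hdiff, abs_neg, abs_of_nonneg (div_nonneg (by nlinarith) (by linarith))]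
    have h4 : g/(2*T) + g/(2*T) = g/T := by
      field_simp
      ring
    have h5 : |Ωi - ((i:ℝ) + a + m / (2*(i:ℝ)))| + |Ωj - ((j:ℝ) + a + m / (2*(j:ℝ)))|
        ≤ 2*C₂*g/(j:ℝ) := by
      have : C₂ * g / (j:ℝ) + C₂ * g / (j:ℝ) = 2*C₂*g/(j:ℝ) := by ring
      linarith [hΩi', hΩj]
    calc |(Ωi - ((i:ℝ) + a + m / (2*(i:ℝ)))) - (Ωj - ((j:ℝ) + a + m / (2*(j:ℝ))))
          + (m/(2*(i:ℝ)) - m/(2*(j:ℝ)))|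
        ≤ |(Ωi - ((i:ℝ) + a + m / (2*(i:ℝ)))) - (Ωj - ((j:ℝ) + a + m / (2*(j:ℝ))))|
          + |m/(2*(i:ℝ)) - m/(2*(j:ℝ))| := h1
      _ ≤ (|Ωi - ((i:ℝ) + a + m / (2*(i:ℝ)))| + |Ωj - ((j:ℝ) + a + m / (2*(j:ℝ)))|)
          + m*((i:ℝ)-j)/(2*((i:ℝ)*j)) := by rw [h3]; linarith
      _ ≤ g/(2*T) + g/(2*T) := by linarith
      _ = g/T := h4
  have htri := abs_sub_abs_le_abs_sub (x + ((i:ℝ)-(j:ℝ))) (x + Ωi - Ωj)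
  have h2g : 2*g/T - g/T = g/T := by ring
  have : |(x + ((i:ℝ)-(j:ℝ))) - (x + Ωi - Ωj)| ≤ g/T := by
    rw [abs_sub_comm]; exact habs
  linarith [hsmall]
end

section
/- Suppose nonnegative sequences ε⁽⁰⁾_i, ε⁽¹⁾_i, ε⁽²⁾_i (i = 0,…,ν) satisfy, with ε̄_i := ε⁽⁰⁾_i + ε⁽¹⁾_i + ε⁽²⁾_i and constants 𝐊, C_*, K_* > 1: ε⁽⁰⁾_{i+1} ≤ C_*𝐊^i ε̄_i² + C_* ε⁽⁰⁾_i e^{−K_* 2^i}, ε⁽¹⁾_{i+1} ≤ C_*𝐊^i(ε⁽⁰⁾_i + ε̄_i²) + C_* ε⁽¹⁾_i e^{−K_* 2^i}, and ε⁽²⁾_{i+1} ≤ C_*𝐊^i(ε⁽⁰⁾_i + ε⁽¹⁾_i + ε̄_i²) + C_* ε⁽²⁾_i e^{−K_* 2^i} for i = 0,…,ν−1. Then there exist ε̄_⋆ < 1, C_⋆ > 0 and χ ∈ (1,2), depending only on 𝐊, C_*, K_*, such that ε̄_0 ≤ ε̄_⋆ implies ε̄_i ≤ C_⋆ ε̄_0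 e^{−K_* χ^i} for all i = 0,…,ν. -/
private lemma nat_mul_pred_nonneg (n : ℕ) : (0:ℝ) ≤ (n:ℝ)*((n:ℝ)-1) := by
  rcases Nat.eq_zero_or_pos n with h|h
  · simp [h]
  · have : (1:ℝ) ≤ n := by exact_mod_cast h
    nlinarith

private lemma bern2 (h : ℝ) (hh : 0 ≤ h) (i : ℕ) :
    1 + (i:ℝ)*h + h^2 * ((i:ℝ)*((i:ℝ)-1))/2 ≤ (1+h)^i := by
  induction i with
  | zero => norm_num
  | succ n ih =>
    have h2 : (1+h)*(1 + (n:ℝ)*h + h^2 * ((n:ℝ)*((n:ℝ)-1))/2) ≤ (1+h)*(1+h)^n :=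
      mul_le_mul_of_nonneg_left ih (by linarith)
    have hnn' := nat_mul_pred_nonneg n
    push_cast
    rw [pow_succ (1+h) n]
    nlinarith [h2, mul_nonneg (mul_nonneg (mul_nonneg hh hh) hh) hnn']

private lemma expbound (s β t : ℝ) (hs : 1 ≤ s) (hβ : 0 < β) (i : ℕ)
    (ht : β * ((i:ℝ)*((i:ℝ)-1)) ≤ t) :
    s^i * Real.exp (-t) ≤ Real.exp ((Real.log s + β)^2/(4*β)) := by
  have hs0 : (0:ℝ) < s := by linarith
  have h1 : s^i = Real.exp ((i:ℝ) * Real.log s) := by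
    rw [← Real.exp_log hs0, ← Real.exp_nat_mul, Real.exp_log hs0]
  rw [h1, ← Real.exp_add]
  apply Real.exp_le_exp.mpr
  have hl : 0 ≤ Real.log s := Real.log_nonneg hs
  rw [le_div_iff₀ (by positivity : (0:ℝ) < 4*β)]
  nlinarith [sq_nonneg (Real.log s + β - 2*β*(i:ℝ)), ht]

set_option maxHeartbeats 2000000 in
theorem stmt14 (Kbig Cstar Kstar : ℝ) (hKbig : 1 < Kbig) (hC : 1 < Cstar) (hK : 1 < Kstar) :
    ∃ εs Cs χ : ℝ, 0 < εs ∧ εs < 1 ∧ 0 < Cs ∧ 1 < χ ∧ χ < 2 ∧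
      ∀ (ν : ℕ) (ε0 ε1 ε2 : ℕ → ℝ),
        (∀ i ≤ ν, 0 ≤ ε0 i ∧ 0 ≤ ε1 i ∧ 0 ≤ ε2 i) →
        (∀ i < ν, ε0 (i+1) ≤ Cstar * Kbig ^ i * (ε0 i + ε1 i + ε2 i)^2
            + Cstar * ε0 i * Real.exp (-Kstar * 2 ^ i)) →
        (∀ i < ν, ε1 (i+1) ≤ Cstar * Kbig ^ i * (ε0 i + (ε0 i + ε1 i + ε2 i)^2)
            + Cstar * ε1 i * Real.exp (-Kstar * 2 ^ i)) →
        (∀ i < ν, ε2 (i+1) ≤ Cstar * Kbig ^ i * (ε0 i + ε1 i + (ε0 i + ε1 i + ε2 i)^2)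
            + Cstar * ε2 i * Real.exp (-Kstar * 2 ^ i)) →
        ε0 0 + ε1 0 + ε2 0 ≤ εs →
        ∀ i ≤ ν, ε0 i + ε1 i + ε2 i
          ≤ Cs * (ε0 0 + ε1 0 + ε2 0) * Real.exp (-Kstar * χ ^ i) := by
  have hK0 : (0:ℝ) < Kstar := by linarith
  have hC0 : (0:ℝ) < Cstar := by linarith
  have hKb0 : (0:ℝ) < Kbig := by linarith
  set M1 : ℝ := Real.exp ((Real.log Kbig + Kstar/1250)^2/(4*(Kstar/1250))) with hM1def
  have hM1pos : 0 < M1 := Real.exp_pos _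
  have hM1ge1 : 1 ≤ M1 := Real.one_le_exp (by positivity)
  set Q : ℝ := Real.exp (2*Kstar) + 8*Cstar*M1 + 4*Cstar with hQdef
  have hexp2K : (1:ℝ) < Real.exp (2*Kstar) := by
    rw [← Real.exp_zero]; exact Real.exp_lt_exp.mpr (by linarith)
  have h8CM1 : 8*Cstar*1 ≤ 8*Cstar*M1 :=
    mul_le_mul_of_nonneg_left hM1ge1 (by positivity)
  have hQ1 : 1 < Q := by
    rw [hQdef]; linarith
  have hQ0 : (0:ℝ) < Q := by linarith
  have hCQ8 : Cstar ≤ Q/8 := by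
    rw [hQdef]; linarith
  set M2 : ℝ := Real.exp ((Real.log (Kbig*Q) + Kstar/625)^2/(4*(Kstar/625))) with hM2def
  have hM2pos : 0 < M2 := Real.exp_pos _
  set M3 : ℝ := Real.exp ((Real.log Q + Kstar/242)^2/(4*(Kstar/242))) with hM3def
  have hM3pos : 0 < M3 := Real.exp_pos _
  clear_value M1 Q M2 M3
  refine ⟨min (1/(12*Cstar*M2)) (1/2), Q*M3, 11/10, ?_, ?_, ?_, by norm_num, by norm_num, ?_⟩
  · exact lt_min (one_div_pos.mpr (mul_pos (mul_pos (by norm_num) hC0) hM2pos)) (by norm_num)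
  · exact lt_of_le_of_lt (min_le_right _ _) (by norm_num)
  · exact mul_pos hQ0 hM3pos
  intro ν ε0 ε1 ε2 hnn h0 h1 h2 hsm
  set ε : ℝ := ε0 0 + ε1 0 + ε2 0 with hεdef
  clear_value ε
  have hεnn : 0 ≤ ε := by
    obtain ⟨a, b, c⟩ := hnn 0 (Nat.zero_le _); rw [hεdef]; linarith
  have hεM2 : 12*Cstar*M2*ε ≤ 1 := by
    have ha : ε ≤ 1/(12*Cstar*M2) := le_trans hsm (min_le_left _ _)
    have hb : (0:ℝ) < 12*Cstar*M2 := mul_pos (mul_pos (by norm_num) hC0) hM2pos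
    rw [le_div_iff₀ hb] at ha; linarith
  -- the internal invariant with χ = 6/5, exponents a = 8/5, b = 13/10
  have key : ∀ i, i ≤ ν →
      ε0 i ≤ Q^(i+1) * ε * Real.exp (-(8/5*Kstar) * (6/5:ℝ)^i) ∧
      ε1 i ≤ Q^(i+1) * ε * Real.exp (-(13/10*Kstar) * (6/5:ℝ)^i) ∧
      ε0 i + ε1 i + ε2 i ≤ Q^(i+1) * ε * Real.exp (-Kstar * (6/5:ℝ)^i) := by
    intro i
    induction i with
    | zero =>
      intro _
      have hbase : ∀ c:ℝ, c ≤ 2*Kstar → ∀ x:ℝ, x ≤ ε →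
          x ≤ Q^(0+1) * ε * Real.exp (-c * (6/5:ℝ)^0) := by
        intro c hc x hxε
        have hecQ : Real.exp c ≤ Q := by
          have h3 : Real.exp c ≤ Real.exp (2*Kstar) := Real.exp_le_exp.mpr hc
          rw [hQdef]; linarith
        have hone : Real.exp c * Real.exp (-c) = 1 := by
          rw [← Real.exp_add]; simp
        have hge : (1:ℝ) ≤ Q * Real.exp (-c) := by
          have := mul_le_mul_of_nonneg_right hecQ (Real.exp_pos (-c)).le
          linarith
        calc x ≤ 1 * ε := by linarith
          _ ≤ (Q * Real.exp (-c)) * ε := mul_le_mul_of_nonneg_right hge hεnn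
          _ = Q^(0+1) * ε * Real.exp (-c * (6/5:ℝ)^0) := by
              rw [pow_zero, pow_one, mul_one]; ring
      obtain ⟨a, b, c⟩ := hnn 0 (Nat.zero_le _)
      exact ⟨hbase _ (by linarith) _ (by rw [hεdef]; linarith),
             hbase _ (by linarith) _ (by rw [hεdef]; linarith),
             hbase _ (by linarith) _ (by rw [hεdef])⟩
    | succ n ih =>
      intro hle
      have hnν : n ≤ ν := Nat.le_of_succ_le hle
      have hlt : n < ν := hle
      obtain ⟨b0, b1, bS⟩ := ih hnν
      obtain ⟨p0, p1, p2⟩ := hnn n hnν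
      have hS : 0 ≤ ε0 n + ε1 n + ε2 n := by linarith
      have hPpos : (0:ℝ) < (6/5:ℝ)^n := by positivity
      have hP1 : (1:ℝ) ≤ (6/5:ℝ)^n := one_le_pow₀ (by norm_num)
      have hP2 : (6/5:ℝ)^n ≤ (2:ℝ)^n := pow_le_pow_left₀ (by norm_num) (by norm_num) n
      have hPq : (n:ℝ)*((n:ℝ)-1)/50 ≤ (6/5:ℝ)^n := by
        have hb := bern2 (1/5) (by norm_num) n
        have hn0 : (0:ℝ) ≤ (n:ℝ) := Nat.cast_nonneg n
        norm_num at hb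
        linarith [hb]
      have hKP2 : Kstar * (6/5:ℝ)^n ≤ Kstar * (2:ℝ)^n :=
        mul_le_mul_of_nonneg_left hP2 hK0.le
      have hKP : (0:ℝ) < Kstar * (6/5:ℝ)^n := mul_pos hK0 hPpos
      have hQE : (0:ℝ) ≤ Q^(n+1)*ε := mul_nonneg (pow_nonneg hQ0.le _) hεnn
      have hCK : (0:ℝ) ≤ Cstar * Kbig^n := mul_nonneg hC0.le (pow_nonneg hKb0.le n)
      have hCQE : (0:ℝ) ≤ Cstar * (Q^(n+1) * ε) := mul_nonneg hC0.le hQE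
      -- smallness facts
      have hKQ1 : (1:ℝ) ≤ Kbig*Q := by
        have := mul_le_mul hKbig.le hQ1.le zero_le_one hKb0.le
        linarith
      have hF1 : (Kbig*Q)^n * Real.exp (-(2/25*Kstar * (6/5:ℝ)^n)) ≤ M2 := by
        rw [hM2def]
        apply expbound (Kbig*Q) (Kstar/625) _ hKQ1 (div_pos hK0 (by norm_num)) n
        linarith [mul_le_mul_of_nonneg_left hPq (by linarith : (0:ℝ) ≤ 2/25*Kstar)]
      have hsmallQ : Cstar * ((Kbig*Q)^n * Real.exp (-(2/25*Kstar * (6/5:ℝ)^n))) * ε ≤ 1/12 := by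
        have hstep := mul_le_mul_of_nonneg_right (mul_le_mul_of_nonneg_left hF1 hC0.le) hεnn
        linarith
      have hF2 : Kbig^n * Real.exp (-(1/25*Kstar * (6/5:ℝ)^n)) ≤ M1 := by
        rw [hM1def]
        apply expbound Kbig (Kstar/1250) _ hKbig.le (div_pos hK0 (by norm_num)) n
        linarith [mul_le_mul_of_nonneg_left hPq (by linarith : (0:ℝ) ≤ 1/25*Kstar)]
      have hsmallM1 : Cstar * (Kbig^n * Real.exp (-(1/25*Kstar * (6/5:ℝ)^n))) ≤ Q/8 := by
        have hstep := mul_le_mul_of_nonneg_left hF2 hC0.le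
        linarith
      -- exponent comparison lemmas
      have g1 : Real.exp (-(2/25*Kstar * (6/5:ℝ)^n)) * Real.exp (-(8/5*Kstar) * ((6/5:ℝ)^n*(6/5)))
          = Real.exp (-Kstar * (6/5:ℝ)^n) * Real.exp (-Kstar * (6/5:ℝ)^n) := by
        rw [← Real.exp_add, ← Real.exp_add]; congr 1; ring
      have g2 : Real.exp (-(8/5*Kstar) * (6/5:ℝ)^n) * Real.exp (-Kstar * 2^n)
          ≤ Real.exp (-(8/5*Kstar) * ((6/5:ℝ)^n*(6/5))) := by
        rw [← Real.exp_add]; apply Real.exp_le_exp.mpr; linarith [hKP2, hKP]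
      have g3 : Real.exp (-(8/5*Kstar) * (6/5:ℝ)^n)
          = Real.exp (-(1/25*Kstar * (6/5:ℝ)^n)) * Real.exp (-(13/10*Kstar) * ((6/5:ℝ)^n*(6/5))) := by
        rw [← Real.exp_add]; congr 1; ring
      have g5 : Real.exp (-(13/10*Kstar) * (6/5:ℝ)^n) * Real.exp (-Kstar * 2^n)
          ≤ Real.exp (-(13/10*Kstar) * ((6/5:ℝ)^n*(6/5))) := by
        rw [← Real.exp_add]; apply Real.exp_le_exp.mpr; linarith [hKP2, hKP]
      have g7 : Real.exp (-(8/5*Kstar) * (6/5:ℝ)^n)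
          ≤ Real.exp (-(1/25*Kstar * (6/5:ℝ)^n)) * Real.exp (-Kstar * ((6/5:ℝ)^n*(6/5))) := by
        rw [← Real.exp_add]; apply Real.exp_le_exp.mpr; linarith [hKP2, hKP]
      have g8 : Real.exp (-(13/10*Kstar) * (6/5:ℝ)^n)
          ≤ Real.exp (-(1/25*Kstar * (6/5:ℝ)^n)) * Real.exp (-Kstar * ((6/5:ℝ)^n*(6/5))) := by
        rw [← Real.exp_add]; apply Real.exp_le_exp.mpr; linarith [hKP2, hKP]
      have g9 : Real.exp (-Kstar * (6/5:ℝ)^n) * Real.exp (-Kstar * 2^n)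
          ≤ Real.exp (-Kstar * ((6/5:ℝ)^n*(6/5))) := by
        rw [← Real.exp_add]; apply Real.exp_le_exp.mpr; linarith [hKP2, hKP]
      have hKP6 : (0:ℝ) < Kstar * ((6/5:ℝ)^n*(6/5)) := mul_pos hK0 (by positivity)
      have hm1 : Real.exp (-(8/5*Kstar) * ((6/5:ℝ)^n*(6/5)))
          ≤ Real.exp (-(13/10*Kstar) * ((6/5:ℝ)^n*(6/5))) := by
        apply Real.exp_le_exp.mpr; linarith [hKP6]
      have hm2 : Real.exp (-(8/5*Kstar) * ((6/5:ℝ)^n*(6/5)))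
          ≤ Real.exp (-Kstar * ((6/5:ℝ)^n*(6/5))) := by
        apply Real.exp_le_exp.mpr; linarith [hKP6]
      -- the quadratic bound, with strongest target exponent 8/5 * 6/5
      have hq : (ε0 n + ε1 n + ε2 n)^2 ≤ (Q^(n+1) * ε * Real.exp (-Kstar * (6/5:ℝ)^n))^2 :=
        pow_le_pow_left₀ hS bS 2
      have hEq : (Cstar * ((Kbig*Q)^n * Real.exp (-(2/25*Kstar * (6/5:ℝ)^n))) * ε)
            * (Q^(n+1+1) * ε * Real.exp (-(8/5*Kstar) * ((6/5:ℝ)^n*(6/5))))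
          = Cstar * Kbig^n * (Q^(n+1) * ε * Real.exp (-Kstar * (6/5:ℝ)^n))^2 := by
        linear_combination (Cstar * Kbig^n * Q^n * Q^(n+1+1) * ε^2) * g1
      have hY : (0:ℝ) ≤ Q^(n+1+1) * ε * Real.exp (-(8/5*Kstar) * ((6/5:ℝ)^n*(6/5))) :=
        mul_nonneg (mul_nonneg (pow_nonneg hQ0.le _) hεnn) (Real.exp_pos _).le
      have hquad : Cstar * Kbig^n * (ε0 n + ε1 n + ε2 n)^2
          ≤ (1/12) * (Q^(n+1+1) * ε * Real.exp (-(8/5*Kstar) * ((6/5:ℝ)^n*(6/5)))) := by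
        have hstep : Cstar * Kbig^n * (ε0 n + ε1 n + ε2 n)^2
            ≤ Cstar * Kbig^n * (Q^(n+1) * ε * Real.exp (-Kstar * (6/5:ℝ)^n))^2 :=
          mul_le_mul_of_nonneg_left hq hCK
        rw [← hEq] at hstep
        exact le_trans hstep (mul_le_mul_of_nonneg_right hsmallQ hY)
      -- component 0
      have c0 : ε0 (n+1) ≤ Q^(n+1+1) * ε * Real.exp (-(8/5*Kstar) * (6/5:ℝ)^(n+1)) := by
        have hrec := h0 n hlt
        have he : Cstar * ε0 n * Real.exp (-Kstar * 2^n)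
            ≤ (1/8) * (Q^(n+1+1) * ε * Real.exp (-(8/5*Kstar) * ((6/5:ℝ)^n*(6/5)))) := by
          calc Cstar * ε0 n * Real.exp (-Kstar * 2^n)
              ≤ Cstar * (Q^(n+1) * ε * Real.exp (-(8/5*Kstar) * (6/5:ℝ)^n)) * Real.exp (-Kstar * 2^n) :=
                mul_le_mul_of_nonneg_right (mul_le_mul_of_nonneg_left b0 hC0.le) (Real.exp_pos _).le
            _ = (Cstar * (Q^(n+1) * ε)) * (Real.exp (-(8/5*Kstar) * (6/5:ℝ)^n) * Real.exp (-Kstar * 2^n)) := by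
                ring
            _ ≤ (Cstar * (Q^(n+1) * ε)) * Real.exp (-(8/5*Kstar) * ((6/5:ℝ)^n*(6/5))) :=
                mul_le_mul_of_nonneg_left g2 hCQE
            _ ≤ (Q/8 * (Q^(n+1) * ε)) * Real.exp (-(8/5*Kstar) * ((6/5:ℝ)^n*(6/5))) :=
                mul_le_mul_of_nonneg_right (mul_le_mul_of_nonneg_right hCQ8 hQE) (Real.exp_pos _).le
            _ = (1/8) * (Q^(n+1+1) * ε * Real.exp (-(8/5*Kstar) * ((6/5:ℝ)^n*(6/5)))) := by ring
        rw [pow_succ (6/5:ℝ) n]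
        linarith [hrec, hquad, he, hY]
      -- component 1
      have hY1 : (0:ℝ) ≤ Q^(n+1+1) * ε * Real.exp (-(13/10*Kstar) * ((6/5:ℝ)^n*(6/5))) :=
        mul_nonneg (mul_nonneg (pow_nonneg hQ0.le _) hεnn) (Real.exp_pos _).le
      have c1 : ε1 (n+1) ≤ Q^(n+1+1) * ε * Real.exp (-(13/10*Kstar) * (6/5:ℝ)^(n+1)) := by
        have hrec := h1 n hlt
        have hquad1 : Cstar * Kbig^n * (ε0 n + ε1 n + ε2 n)^2
            ≤ (1/12) * (Q^(n+1+1) * ε * Real.exp (-(13/10*Kstar) * ((6/5:ℝ)^n*(6/5)))) := by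
          have := mul_le_mul_of_nonneg_left hm1 (mul_nonneg (pow_nonneg hQ0.le (n+1+1)) hεnn)
          linarith [hquad]
        have hA : Cstar * Kbig^n * ε0 n
            ≤ (1/8) * (Q^(n+1+1) * ε * Real.exp (-(13/10*Kstar) * ((6/5:ℝ)^n*(6/5)))) := by
          calc Cstar * Kbig^n * ε0 n
              ≤ Cstar * Kbig^n * (Q^(n+1) * ε * Real.exp (-(8/5*Kstar) * (6/5:ℝ)^n)) :=
                mul_le_mul_of_nonneg_left b0 hCK
            _ = (Cstar * (Kbig^n * Real.exp (-(1/25*Kstar * (6/5:ℝ)^n))))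
                * (Q^(n+1) * ε * Real.exp (-(13/10*Kstar) * ((6/5:ℝ)^n*(6/5)))) := by
                rw [g3]; ring
            _ ≤ (Q/8) * (Q^(n+1) * ε * Real.exp (-(13/10*Kstar) * ((6/5:ℝ)^n*(6/5)))) :=
                mul_le_mul_of_nonneg_right hsmallM1
                  (mul_nonneg (mul_nonneg (pow_nonneg hQ0.le _) hεnn) (Real.exp_pos _).le)
            _ = (1/8) * (Q^(n+1+1) * ε * Real.exp (-(13/10*Kstar) * ((6/5:ℝ)^n*(6/5)))) := by ring
        have he1 : Cstar * ε1 n * Real.exp (-Kstar * 2^n)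
            ≤ (1/8) * (Q^(n+1+1) * ε * Real.exp (-(13/10*Kstar) * ((6/5:ℝ)^n*(6/5)))) := by
          calc Cstar * ε1 n * Real.exp (-Kstar * 2^n)
              ≤ Cstar * (Q^(n+1) * ε * Real.exp (-(13/10*Kstar) * (6/5:ℝ)^n)) * Real.exp (-Kstar * 2^n) :=
                mul_le_mul_of_nonneg_right (mul_le_mul_of_nonneg_left b1 hC0.le) (Real.exp_pos _).le
            _ = (Cstar * (Q^(n+1) * ε)) * (Real.exp (-(13/10*Kstar) * (6/5:ℝ)^n) * Real.exp (-Kstar * 2^n)) := by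
                ring
            _ ≤ (Cstar * (Q^(n+1) * ε)) * Real.exp (-(13/10*Kstar) * ((6/5:ℝ)^n*(6/5))) :=
                mul_le_mul_of_nonneg_left g5 hCQE
            _ ≤ (Q/8 * (Q^(n+1) * ε)) * Real.exp (-(13/10*Kstar) * ((6/5:ℝ)^n*(6/5))) :=
                mul_le_mul_of_nonneg_right (mul_le_mul_of_nonneg_right hCQ8 hQE) (Real.exp_pos _).le
            _ = (1/8) * (Q^(n+1+1) * ε * Real.exp (-(13/10*Kstar) * ((6/5:ℝ)^n*(6/5)))) := by ring
        rw [pow_succ (6/5:ℝ) n]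
        linarith [hrec, hquad1, hA, he1, hY1]
      -- the sum
      have hYS : (0:ℝ) ≤ Q^(n+1+1) * ε * Real.exp (-Kstar * ((6/5:ℝ)^n*(6/5))) :=
        mul_nonneg (mul_nonneg (pow_nonneg hQ0.le _) hεnn) (Real.exp_pos _).le
      have cS : ε0 (n+1) + ε1 (n+1) + ε2 (n+1)
          ≤ Q^(n+1+1) * ε * Real.exp (-Kstar * (6/5:ℝ)^(n+1)) := by
        have hr0 := h0 n hlt
        have hr1 := h1 n hlt
        have hr2 := h2 n hlt
        have hquadS : Cstar * Kbig^n * (ε0 n + ε1 n + ε2 n)^2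
            ≤ (1/12) * (Q^(n+1+1) * ε * Real.exp (-Kstar * ((6/5:ℝ)^n*(6/5)))) := by
          have := mul_le_mul_of_nonneg_left hm2 (mul_nonneg (pow_nonneg hQ0.le (n+1+1)) hεnn)
          linarith [hquad]
        have hA0 : Cstar * Kbig^n * ε0 n
            ≤ (1/8) * (Q^(n+1+1) * ε * Real.exp (-Kstar * ((6/5:ℝ)^n*(6/5)))) := by
          calc Cstar * Kbig^n * ε0 n
              ≤ Cstar * Kbig^n * (Q^(n+1) * ε * Real.exp (-(8/5*Kstar) * (6/5:ℝ)^n)) :=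
                mul_le_mul_of_nonneg_left b0 hCK
            _ ≤ Cstar * Kbig^n * (Q^(n+1) * ε * (Real.exp (-(1/25*Kstar * (6/5:ℝ)^n))
                * Real.exp (-Kstar * ((6/5:ℝ)^n*(6/5))))) := by
                apply mul_le_mul_of_nonneg_left _ hCK
                apply mul_le_mul_of_nonneg_left g7 hQE
            _ = (Cstar * (Kbig^n * Real.exp (-(1/25*Kstar * (6/5:ℝ)^n))))
                * (Q^(n+1) * ε * Real.exp (-Kstar * ((6/5:ℝ)^n*(6/5)))) := by ring
            _ ≤ (Q/8) * (Q^(n+1) * ε * Real.exp (-Kstar * ((6/5:ℝ)^n*(6/5)))) :=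
                mul_le_mul_of_nonneg_right hsmallM1
                  (mul_nonneg (mul_nonneg (pow_nonneg hQ0.le _) hεnn) (Real.exp_pos _).le)
            _ = (1/8) * (Q^(n+1+1) * ε * Real.exp (-Kstar * ((6/5:ℝ)^n*(6/5)))) := by ring
        have hA1 : Cstar * Kbig^n * ε1 n
            ≤ (1/8) * (Q^(n+1+1) * ε * Real.exp (-Kstar * ((6/5:ℝ)^n*(6/5)))) := by
          calc Cstar * Kbig^n * ε1 n
              ≤ Cstar * Kbig^n * (Q^(n+1) * ε * Real.exp (-(13/10*Kstar) * (6/5:ℝ)^n)) :=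
                mul_le_mul_of_nonneg_left b1 hCK
            _ ≤ Cstar * Kbig^n * (Q^(n+1) * ε * (Real.exp (-(1/25*Kstar * (6/5:ℝ)^n))
                * Real.exp (-Kstar * ((6/5:ℝ)^n*(6/5))))) := by
                apply mul_le_mul_of_nonneg_left _ hCK
                apply mul_le_mul_of_nonneg_left g8 hQE
            _ = (Cstar * (Kbig^n * Real.exp (-(1/25*Kstar * (6/5:ℝ)^n))))
                * (Q^(n+1) * ε * Real.exp (-Kstar * ((6/5:ℝ)^n*(6/5)))) := by ring
            _ ≤ (Q/8) * (Q^(n+1) * ε * Real.exp (-Kstar * ((6/5:ℝ)^n*(6/5)))) :=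
                mul_le_mul_of_nonneg_right hsmallM1
                  (mul_nonneg (mul_nonneg (pow_nonneg hQ0.le _) hεnn) (Real.exp_pos _).le)
            _ = (1/8) * (Q^(n+1+1) * ε * Real.exp (-Kstar * ((6/5:ℝ)^n*(6/5)))) := by ring
        have heS : Cstar * (ε0 n + ε1 n + ε2 n) * Real.exp (-Kstar * 2^n)
            ≤ (1/8) * (Q^(n+1+1) * ε * Real.exp (-Kstar * ((6/5:ℝ)^n*(6/5)))) := by
          calc Cstar * (ε0 n + ε1 n + ε2 n) * Real.exp (-Kstar * 2^n)
              ≤ Cstar * (Q^(n+1) * ε * Real.exp (-Kstar * (6/5:ℝ)^n)) * Real.exp (-Kstar * 2^n) :=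
                mul_le_mul_of_nonneg_right (mul_le_mul_of_nonneg_left bS hC0.le) (Real.exp_pos _).le
            _ = (Cstar * (Q^(n+1) * ε)) * (Real.exp (-Kstar * (6/5:ℝ)^n) * Real.exp (-Kstar * 2^n)) := by
                ring
            _ ≤ (Cstar * (Q^(n+1) * ε)) * Real.exp (-Kstar * ((6/5:ℝ)^n*(6/5))) :=
                mul_le_mul_of_nonneg_left g9 hCQE
            _ ≤ (Q/8 * (Q^(n+1) * ε)) * Real.exp (-Kstar * ((6/5:ℝ)^n*(6/5))) :=
                mul_le_mul_of_nonneg_right (mul_le_mul_of_nonneg_right hCQ8 hQE) (Real.exp_pos _).le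
            _ = (1/8) * (Q^(n+1+1) * ε * Real.exp (-Kstar * ((6/5:ℝ)^n*(6/5)))) := by ring
        rw [pow_succ (6/5:ℝ) n]
        linarith [hr0, hr1, hr2, hquadS, hA0, hA1, heS, hYS]
      exact ⟨c0, c1, cS⟩
  -- conclude, with reported χ = 11/10
  intro i hiν
  obtain ⟨-, -, hb⟩ := key i hiν
  have hmp : ((6:ℝ)/5)^i = (11/10:ℝ)^i * (12/11:ℝ)^i := by
    rw [← mul_pow]; norm_num
  have hb1 : (1:ℝ) ≤ (11/10:ℝ)^i := one_le_pow₀ (by norm_num)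
  have hb2 := bern2 (1/11) (by norm_num) i
  have h1211 : ((1:ℝ)+1/11) = 12/11 := by norm_num
  rw [h1211] at hb2
  have hnn2 := nat_mul_pred_nonneg i
  have hni : (0:ℝ) ≤ (i:ℝ) := Nat.cast_nonneg i
  have hgap : Kstar/242 * ((i:ℝ)*((i:ℝ)-1)) ≤ Kstar*(6/5:ℝ)^i - Kstar*(11/10:ℝ)^i := by
    have hc0 : (0:ℝ) ≤ (i:ℝ)*(1/11) + (1/11:ℝ)^2*((i:ℝ)*((i:ℝ)-1))/2 := by
      have := mul_nonneg hni (by norm_num : (0:ℝ) ≤ (1:ℝ)/11)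
      nlinarith [hnn2]
    have hstep : (11/10:ℝ)^i * (1 + (i:ℝ)*(1/11) + (1/11:ℝ)^2*((i:ℝ)*((i:ℝ)-1))/2)
        ≤ (11/10:ℝ)^i * (12/11:ℝ)^i :=
      mul_le_mul_of_nonneg_left hb2 (by positivity)
    have t1 : (i:ℝ)*(1/11) + (1/11:ℝ)^2*((i:ℝ)*((i:ℝ)-1))/2
        ≤ (11/10:ℝ)^i * (12/11:ℝ)^i - (11/10:ℝ)^i := by
      nlinarith [hstep, hb1, hc0]
    have t2 := mul_le_mul_of_nonneg_left t1 hK0.le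
    have t3 : (0:ℝ) ≤ Kstar * ((i:ℝ)*(1/11)) := by positivity
    rw [hmp]
    nlinarith [t2, t3]
  have hexp : Real.exp (-Kstar * (6/5:ℝ)^i)
      = Real.exp (-(Kstar*(6/5:ℝ)^i - Kstar*(11/10:ℝ)^i)) * Real.exp (-Kstar * (11/10:ℝ)^i) := by
    rw [← Real.exp_add]; congr 1; ring
  have h3 := expbound Q (Kstar/242) (Kstar*(6/5:ℝ)^i - Kstar*(11/10:ℝ)^i) hQ1.le (div_pos hK0 (by norm_num)) i hgap
  rw [← hM3def] at h3
  calc ε0 i + ε1 i + ε2 i ≤ Q^(i+1) * ε * Real.exp (-Kstar * (6/5:ℝ)^i) := hb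
    _ = (Q * ε * Real.exp (-Kstar * (11/10:ℝ)^i))
        * (Q^i * Real.exp (-(Kstar*(6/5:ℝ)^i - Kstar*(11/10:ℝ)^i))) := by
        rw [hexp]; ring
    _ ≤ (Q * ε * Real.exp (-Kstar * (11/10:ℝ)^i)) * M3 :=
        mul_le_mul_of_nonneg_left h3 (mul_nonneg (mul_nonneg hQ0.le hεnn) (Real.exp_pos _).le)
    _ = Q*M3 * ε * Real.exp (-Kstar * (11/10:ℝ)^i) := by ring
end

section
/- Let a_j (j ≥ 0) be nonnegative reals with a_j ≤ 1 for all j, satisfying a_{j+1} ≤ A·B^j(a_j² + a_j e^{−K 2^{3j}}) for all j, with constants A ≥ 1, B > 1, K > 1. Then there exist constants c ≥ 1 (depending on A, B, K) and a threshold ε_* > 0 such that if a₀ ≤ ε_* then a_j ≤ c^{j+1} a₀ e^{−K (5/4)^{3j}} for all j ≥ 0. -/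
/-- Key quadratic lower bound: `M*j ≤ ε e^{λ j} + M²/(ε λ²)`. -/
lemma stmt15_key (M lam eps : ℝ) (hM : 0 ≤ M) (hl : 0 < lam) (he : 0 < eps) (j : ℕ) :
    M * j ≤ eps * Real.exp (lam * j) + M ^ 2 / (eps * lam ^ 2) := by
  have hx : (0:ℝ) ≤ lam * j := by positivity
  have h1 : lam * j / 2 + 1 ≤ Real.exp (lam * j / 2) := Real.add_one_le_exp _
  have h2 : Real.exp (lam * j) = Real.exp (lam * j / 2) * Real.exp (lam * j / 2) := by
    rw [← Real.exp_add]; ring_nf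
  have h3 : (lam * j) ^ 2 / 4 ≤ Real.exp (lam * j) := by nlinarith
  have h4 : M * j - eps * ((lam * j) ^ 2 / 4) ≤ M ^ 2 / (eps * lam ^ 2) := by
    rw [le_div_iff₀ (by positivity)]
    nlinarith [sq_nonneg (eps * lam ^ 2 * j / 2 - M)]
  nlinarith [mul_le_mul_of_nonneg_left h3 he.le]

/-- Pow version of the key bound. -/
lemma stmt15_key' (M b eps : ℝ) (hM : 0 ≤ M) (hb : 1 < b) (he : 0 < eps) (j : ℕ) :
    M * j ≤ eps * b ^ j + M ^ 2 / (eps * (Real.log b) ^ 2) := by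
  have hb0 : (0:ℝ) < b := by linarith
  have hlb : 0 < Real.log b := Real.log_pos hb
  have hpow : b ^ j = Real.exp (Real.log b * j) := by
    rw [mul_comm, Real.exp_nat_mul, Real.exp_log hb0]
  rw [hpow]
  exact stmt15_key M (Real.log b) eps hM hlb he j

set_option maxHeartbeats 1000000 in
theorem stmt15 (A B K : ℝ) (hA : 1 ≤ A) (hB : 1 < B) (hK : 1 < K) :
    ∃ c εs : ℝ, 1 ≤ c ∧ 0 < εs ∧
      ∀ a : ℕ → ℝ, (∀ j, 0 ≤ a j) → (∀ j, a j ≤ 1) →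
        (∀ j, a (j+1) ≤ A * B ^ j * ((a j)^2 + a j * Real.exp (-K * 2 ^ (3*j)))) →
        a 0 ≤ εs →
        ∀ j, a j ≤ c ^ (j+1) * a 0 * Real.exp (-K * ((5:ℝ)/4) ^ (3*j)) := by
  have hK0 : (0:ℝ) < K := by linarith
  have hε : (0:ℝ) < 3 * K / 64 := by linarith
  have hB0 : (0:ℝ) < B := by linarith
  obtain ⟨C2, hC2def⟩ : ∃ x : ℝ, x = (Real.log B) ^ 2 / (3 * K / 64 * (Real.log 8) ^ 2) := ⟨_, rfl⟩
  have hlog8 : (0:ℝ) < Real.log 8 := Real.log_pos (by norm_num)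
  have hC2 : 0 ≤ C2 := by rw [hC2def]; positivity
  obtain ⟨c, hcdef⟩ : ∃ x : ℝ, x = 2 * A * Real.exp C2 * Real.exp K := ⟨_, rfl⟩
  have hexpC2 : (1:ℝ) ≤ Real.exp C2 := Real.one_le_exp hC2
  have hexpK : (1:ℝ) ≤ Real.exp K := Real.one_le_exp hK0.le
  have hc0 : (0:ℝ) < c := by rw [hcdef]; positivity
  have hc1 : (1:ℝ) ≤ c := by
    rw [hcdef]
    nlinarith [mul_le_mul_of_nonneg_left hexpK (by positivity : (0:ℝ) ≤ 2 * A * Real.exp C2),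
      mul_le_mul_of_nonneg_left hexpC2 (by linarith : (0:ℝ) ≤ 2 * A)]
  have hBc : (1:ℝ) < B * c := by nlinarith
  obtain ⟨M, hMdef⟩ : ∃ x : ℝ, x = Real.log (B * c) := ⟨_, rfl⟩
  have hM0 : (0:ℝ) ≤ M := hMdef ▸ Real.log_nonneg hBc.le
  have hlogr : (0:ℝ) < Real.log (125 / 64 : ℝ) := Real.log_pos (by norm_num)
  obtain ⟨C1, hC1def⟩ : ∃ x : ℝ, x = M ^ 2 / (3 * K / 64 * (Real.log (125 / 64 : ℝ)) ^ 2) := ⟨_, rfl⟩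
  have hC1 : 0 ≤ C1 := by rw [hC1def]; positivity
  refine ⟨c, 1 / (2 * A * Real.exp C1), hc1, by positivity, ?_⟩
  intro a hpos hle1 hrec ha0
  -- scalar inequality 1
  have hS1 : ∀ j : ℕ, 2 * A * a 0 * (B * c) ^ j ≤ Real.exp (3 * K / 64 * (125/64 : ℝ) ^ j) := by
    intro j
    have hk := stmt15_key' M (125/64 : ℝ) (3 * K / 64) hM0 (by norm_num) hε j
    have hpow : (B * c) ^ j = Real.exp (M * j) := by
      rw [hMdef, mul_comm (Real.log (B*c)), Real.exp_nat_mul, Real.exp_log (by nlinarith)]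
    have h1 : (B * c) ^ j ≤ Real.exp (3 * K / 64 * (125/64 : ℝ) ^ j + C1) := by
      rw [hpow]; exact Real.exp_le_exp.2 (by rw [hC1def]; exact hk)
    have h2 : 2 * A * a 0 ≤ Real.exp (-C1) := by
      have hA0 : (0:ℝ) < 2 * A * Real.exp C1 := by positivity
      have := mul_le_mul_of_nonneg_left ha0 (by positivity : (0:ℝ) ≤ 2 * A)
      calc 2 * A * a 0 ≤ 2 * A * (1 / (2 * A * Real.exp C1)) := this
        _ = 1 / Real.exp C1 := by field_simp
        _ = Real.exp (-C1) := by rw [Real.exp_neg]; ring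
    calc 2 * A * a 0 * (B * c) ^ j
        ≤ Real.exp (-C1) * Real.exp (3 * K / 64 * (125/64 : ℝ) ^ j + C1) := by
          apply mul_le_mul h2 h1 (by positivity) (by positivity)
      _ = Real.exp (3 * K / 64 * (125/64 : ℝ) ^ j) := by rw [← Real.exp_add]; ring_nf
  -- scalar inequality 2
  have hS2 : ∀ j : ℕ, 2 * A * B ^ j ≤ c * Real.exp (3 * K / 64 * (8:ℝ) ^ j) := by
    intro j
    have hk := stmt15_key' (Real.log B) (8 : ℝ) (3 * K / 64)
      (Real.log_nonneg hB.le) (by norm_num) hε j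
    have hpow : B ^ j = Real.exp (Real.log B * j) := by
      rw [mul_comm, Real.exp_nat_mul, Real.exp_log hB0]
    have h1 : B ^ j ≤ Real.exp (3 * K / 64 * (8:ℝ) ^ j + C2) := by
      rw [hpow]; exact Real.exp_le_exp.2 (by rw [hC2def]; exact hk)
    calc 2 * A * B ^ j ≤ 2 * A * Real.exp (3 * K / 64 * (8:ℝ) ^ j + C2) := by
          apply mul_le_mul_of_nonneg_left h1 (by positivity)
      _ = 2 * A * Real.exp C2 * Real.exp (3 * K / 64 * (8:ℝ) ^ j) := by
          rw [Real.exp_add]; ring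
      _ ≤ c * Real.exp (3 * K / 64 * (8:ℝ) ^ j) := by
          apply mul_le_mul_of_nonneg_right _ (Real.exp_pos _).le
          rw [hcdef]; nlinarith
  -- main induction with exponent (125/64)^j
  have main : ∀ j, a j ≤ c ^ (j+1) * a 0 * Real.exp (-K * (125/64 : ℝ) ^ j) := by
    intro j
    induction j with
    | zero =>
      have h1 : (1:ℝ) ≤ c * Real.exp (-K) := by
        have : c * Real.exp (-K) = 2 * A * Real.exp C2 := by
          rw [hcdef, mul_assoc, ← Real.exp_add, add_neg_cancel, Real.exp_zero, mul_one]
        rw [this]; nlinarith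
      have := mul_le_mul_of_nonneg_left h1 (hpos 0)
      simpa [mul_comm, mul_assoc, mul_left_comm] using this
    | succ j ih =>
      have ha00 : 0 ≤ a 0 := hpos 0
      obtain ⟨Ej, hEj⟩ : ∃ x : ℝ, x = Real.exp (-K * (125/64 : ℝ) ^ j) := ⟨_, rfl⟩
      obtain ⟨E8, hE8⟩ : ∃ x : ℝ, x = Real.exp (-K * (8 : ℝ) ^ j) := ⟨_, rfl⟩
      have hEj0 : 0 < Ej := hEj ▸ Real.exp_pos _
      have hE80 : 0 < E8 := hE8 ▸ Real.exp_pos _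
      obtain ⟨X, hX⟩ : ∃ x : ℝ, x = c ^ (j+1) * a 0 * Ej := ⟨_, rfl⟩
      have hX0 : 0 ≤ X := by rw [hX]; exact mul_nonneg (mul_nonneg (by positivity) ha00) hEj0.le
      have hrj : (0:ℝ) < (125/64 : ℝ) ^ j := by positivity
      have hr8 : ((125:ℝ)/64) ^ j ≤ (8:ℝ) ^ j :=
        pow_le_pow_left₀ (by norm_num) (by norm_num) j
      have h1 : a (j+1) ≤ A * B ^ j * ((a j)^2 + a j * E8) := by
        have := hrec j
        have h2 : (2:ℝ) ^ (3*j) = (8:ℝ) ^ j := by rw [pow_mul]; norm_num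
        rwa [h2, ← hE8] at this
      have hihX : a j ≤ X := by rw [hX, hEj]; exact ih
      have h2 : (a j)^2 + a j * E8 ≤ X^2 + X * E8 := by
        have hsq : (a j)^2 ≤ X^2 := pow_le_pow_left₀ (hpos j) hihX 2
        have hE : a j * E8 ≤ X * E8 := mul_le_mul_of_nonneg_right hihX hE80.le
        linarith
      have h3 : a (j+1) ≤ A * B ^ j * X^2 + A * B ^ j * (X * E8) := by
        have := mul_le_mul_of_nonneg_left h2 (by positivity : (0:ℝ) ≤ A * B ^ j)
        nlinarith
      -- Term 1
      have T1 : A * B ^ j * X^2 ≤ 1/2 * c ^ (j+2) * a 0 * Real.exp (-K * (125/64:ℝ) ^ (j+1)) := by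
        have hmul := mul_le_mul_of_nonneg_left (hS1 j)
          (mul_nonneg (mul_nonneg (by positivity) ha00) (by positivity) :
            (0:ℝ) ≤ 1/2 * c ^ (j+2) * a 0 * Ej^2)
        have hl : 1/2 * c ^ (j+2) * a 0 * Ej^2 * (2 * A * a 0 * (B * c) ^ j)
            = A * B ^ j * X^2 := by
          rw [hX, mul_pow (B) c j]; ring
        have hr : 1/2 * c ^ (j+2) * a 0 * Ej^2 * Real.exp (3 * K / 64 * (125/64 : ℝ) ^ j)
            = 1/2 * c ^ (j+2) * a 0 * Real.exp (-K * (125/64:ℝ) ^ (j+1)) := by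
          rw [hEj, sq, ← Real.exp_add]
          have : -K * (125/64:ℝ) ^ j + -K * (125/64:ℝ) ^ j + 3 * K / 64 * (125/64 : ℝ) ^ j
              = -K * (125/64:ℝ) ^ (j+1) := by rw [pow_succ]; ring
          rw [mul_assoc, mul_assoc, ← Real.exp_add, this]; ring
        rw [hl, hr] at hmul; exact hmul
      -- Term 2
      have T2 : A * B ^ j * (X * E8)
          ≤ 1/2 * c ^ (j+2) * a 0 * Real.exp (-K * (125/64:ℝ) ^ (j+1)) := by
        have hmul := mul_le_mul_of_nonneg_left (hS2 j)
          (mul_nonneg (mul_nonneg (mul_nonneg (by positivity) ha00) hEj0.le) hE80.le :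
            (0:ℝ) ≤ 1/2 * c ^ (j+1) * a 0 * Ej * E8)
        have hl : 1/2 * c ^ (j+1) * a 0 * Ej * E8 * (2 * A * B ^ j)
            = A * B ^ j * (X * E8) := by rw [hX]; ring
        have hr : 1/2 * c ^ (j+1) * a 0 * Ej * E8 * (c * Real.exp (3 * K / 64 * (8:ℝ) ^ j))
            ≤ 1/2 * c ^ (j+2) * a 0 * Real.exp (-K * (125/64:ℝ) ^ (j+1)) := by
          have hEE : Ej * E8 * Real.exp (3 * K / 64 * (8:ℝ) ^ j)
              ≤ Real.exp (-K * (125/64:ℝ) ^ (j+1)) := by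
            rw [hEj, hE8, ← Real.exp_add, ← Real.exp_add]
            apply Real.exp_le_exp.2
            rw [pow_succ]
            nlinarith
          calc 1/2 * c ^ (j+1) * a 0 * Ej * E8 * (c * Real.exp (3 * K / 64 * (8:ℝ) ^ j))
              = 1/2 * c ^ (j+2) * a 0 * (Ej * E8 * Real.exp (3 * K / 64 * (8:ℝ) ^ j)) := by
                ring
            _ ≤ 1/2 * c ^ (j+2) * a 0 * Real.exp (-K * (125/64:ℝ) ^ (j+1)) := by
                exact mul_le_mul_of_nonneg_left hEE
                  (mul_nonneg (by positivity) ha00)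
        calc A * B ^ j * (X * E8)
            = 1/2 * c ^ (j+1) * a 0 * Ej * E8 * (2 * A * B ^ j) := hl.symm
          _ ≤ 1/2 * c ^ (j+1) * a 0 * Ej * E8 * (c * Real.exp (3 * K / 64 * (8:ℝ) ^ j)) := hmul
          _ ≤ 1/2 * c ^ (j+2) * a 0 * Real.exp (-K * (125/64:ℝ) ^ (j+1)) := hr
      have : a (j+1) ≤ c ^ (j+2) * a 0 * Real.exp (-K * (125/64:ℝ) ^ (j+1)) := by
        linarith
      exact this
  intro j
  have hre : ((5:ℝ)/4) ^ (3*j) = ((125:ℝ)/64) ^ j := by rw [pow_mul]; norm_num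
  rw [hre]
  exact main j
end
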